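/- arXiv:2504.03566 — 2 statements merged into one kernel-verified Lean document; each statement's English description precedes it below -/
import Mathlib

section
/- Let G be a finite weighted graph. If A is a strong nodal domain of a 1-Laplacian eigenfunction f with eigenvalue Λ, then the characteristic function χ_A of A is itself a 1-Laplacian eigenfunction with the same eigenvalue Λ. -/
open Finset

/-- `A` is a strong nodal domain of `f`: a maximal connected subset of the interior
vertices on which `f` has strictly constant sign. -/
def IsStrongNodalDomain {V : Type*} (G : SimpleGraph V) (int : Set V) (f : V → ℝ)
    (A : Set V) : Prop :=
  A.Nonempty ∧ A ⊆ int ∧ ((∀ u ∈ A, 0 < f u) ∨ (∀ u ∈ A, f u < 0)) ∧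
  (G.induce A).Connected ∧
  ∀ B : Set V, A ⊆ B → B ⊆ int → ((∀ u ∈ B, 0 < f u) ∨ (∀ u ∈ B, f u < 0)) →
    (G.induce B).Connected → B = A
/-- The set-valued sign: `{1}` if `x>0`, `[-1,1]` if `x=0`, `{-1}` if `x<0`. -/
def signSet (x : ℝ) : Set ℝ := {s : ℝ | |s| ≤ 1 ∧ s * x = |x|}

/-- `(f, Λ)` is a generalized eigenpair of the graph `1`-Laplacian (with Dirichlet
boundary `Bd`): there are subgradients `ξ ∈ ∂‖f‖_{ν,1}` and `Ξ ∈ ∂‖Kf‖_1` with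
`K^T Ξ = Λ ν ⊙ ξ` on interior vertices. -/
def IsOneEigenpair {V : Type*} [Fintype V] (G : SimpleGraph V) [DecidableRel G.Adj]
    (ω : V → V → ℝ) (ν : V → ℝ) (Bd : Set V) (f : V → ℝ) (Λ : ℝ) : Prop :=
  f ≠ 0 ∧ (∀ u ∈ Bd, f u = 0) ∧
  ∃ ξ : V → ℝ, ∃ Ξ : V → V → ℝ,
    (∀ u, ξ u ∈ signSet (f u)) ∧
    (∀ u v, G.Adj u v → Ξ u v ∈ signSet (ω u v * (f v - f u))) ∧
    ∀ u, u ∉ Bd →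
      (1 / 2) * ∑ v ∈ G.neighborFinset u, ω u v * (Ξ v u - Ξ u v) = Λ * ν u * ξ u

/-!
The subgradients `ξ, Ξ` certifying `f` also certify `χ_A`, after replacing `(f, ξ, Ξ)` by
`(-f, -ξ, -Ξ)` if `f < 0` on `A`. Indeed, a set-valued sign `Sign x` only grows when `x` is
replaced by a value whose sign is `0` or that of `x`. Here `χ_A` is positive only on `A`, where
`f > 0`, and by maximality of `A` every neighbour of `A` outside it has `f ≤ 0`; so each nonzero
edge difference of `χ_A` has the sign of the corresponding difference of `f`.
-/

lemma signSet_subset_signSet {x y : ℝ} (hpos : 0 < y → 0 < x) (hneg : y < 0 → x < 0) :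
    signSet x ⊆ signSet y := by
  rintro s ⟨hs, hsx⟩
  refine ⟨hs, ?_⟩
  rcases lt_trichotomy y 0 with hy | rfl | hy
  · have hx := hneg hy
    have hs' : s = -1 := by
      rw [abs_of_neg hx] at hsx
      exact mul_right_cancel₀ hx.ne (by linarith)
    rw [hs', abs_of_neg hy]; ring
  · simp
  · have hx := hpos hy
    have hs' : s = 1 := by
      rw [abs_of_pos hx] at hsx
      exact mul_right_cancel₀ hx.ne' (by linarith)
    rw [hs', abs_of_pos hy]; ring

lemma neg_mem_signSet_neg {s x : ℝ} (h : s ∈ signSet x) : -s ∈ signSet (-x) := by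
  obtain ⟨hs, hsx⟩ := h
  exact ⟨by rwa [abs_neg], by rw [abs_neg, ← hsx]; ring⟩

lemma IsOneEigenpair.neg {V : Type*} [Fintype V] {G : SimpleGraph V} [DecidableRel G.Adj]
    {ω : V → V → ℝ} {ν : V → ℝ} {Bd : Set V} {f : V → ℝ} {Λ : ℝ}
    (h : IsOneEigenpair G ω ν Bd f Λ) : IsOneEigenpair G ω ν Bd (-f) Λ := by
  obtain ⟨hf, hBd, ξ, Ξ, hξ, hΞ, heq⟩ := h
  refine ⟨neg_ne_zero.mpr hf, fun u hu => by simp [hBd u hu], -ξ, fun u v => -Ξ u v,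
    fun u => neg_mem_signSet_neg (hξ u), fun u v huv => ?_, fun u hu => ?_⟩
  · have := neg_mem_signSet_neg (hΞ u v huv)
    rwa [← mul_neg, neg_sub, ← neg_sub_neg] at this
  · have hsum : ∑ v ∈ G.neighborFinset u, ω u v * (-Ξ v u - -Ξ u v)
        = -∑ v ∈ G.neighborFinset u, ω u v * (Ξ v u - Ξ u v) := by
      rw [← Finset.sum_neg_distrib]
      exact Finset.sum_congr rfl fun v _ => by ring
    rw [hsum, Pi.neg_apply]
    linarith [heq u hu]

lemma IsStrongNodalDomain.neg {V : Type*} {G : SimpleGraph V} {int : Set V} {f : V → ℝ}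
    {A : Set V} (h : IsStrongNodalDomain G int f A) : IsStrongNodalDomain G int (-f) A := by
  simp only [IsStrongNodalDomain, Pi.neg_apply, neg_pos, neg_lt_zero] at h ⊢
  obtain ⟨hne, hint, hsgn, hconn, hmax⟩ := h
  exact ⟨hne, hint, hsgn.symm, hconn, fun B hAB hBint hB => hmax B hAB hBint hB.symm⟩

lemma IsStrongNodalDomain.nonpos_of_adj {V : Type*} {G : SimpleGraph V} {int : Set V}
    {f : V → ℝ} {A : Set V} (hA : IsStrongNodalDomain G int f A) (hpos : ∀ u ∈ A, 0 < f u)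
    {u v : V} (hu : u ∈ A) (hv : v ∉ A) (hvint : v ∈ int) (huv : G.Adj u v) : f v ≤ 0 := by
  obtain ⟨-, hint, -, hconn, hmax⟩ := hA
  by_contra! hfv
  have hconn' : (G.induce (A ∪ {v})).Connected :=
    G.connected_induce_union hconn.preconnected .of_subsingleton hu rfl huv
  have hpos' : ∀ w ∈ A ∪ {v}, 0 < f w := by
    rintro w (hw | rfl)
    exacts [hpos w hw, hfv]
  have := hmax (A ∪ {v}) Set.subset_union_left
    (Set.union_subset hint (Set.singleton_subset_iff.mpr hvint)) (.inl hpos') hconn'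
  exact hv (this ▸ Set.mem_union_right A rfl)

lemma isOneEigenpair_indicator_of_pos {V : Type*} [Fintype V] [DecidableEq V]
    {G : SimpleGraph V} [DecidableRel G.Adj] {ω : V → V → ℝ} {ν : V → ℝ} {Bd : Set V}
    {f : V → ℝ} {Λ : ℝ} (heig : IsOneEigenpair G ω ν Bd f Λ)
    (hω : ∀ u v, G.Adj u v → 0 < ω u v) {A : Finset V} (hA : A.Nonempty)
    (hpos : ∀ u ∈ A, 0 < f u) (hout : ∀ u ∈ A, ∀ v ∉ A, G.Adj u v → f v ≤ 0) :
    IsOneEigenpair G ω ν Bd (fun u => if u ∈ A then (1 : ℝ) else 0) Λ := by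
  obtain ⟨-, hBd, ξ, Ξ, hξ, hΞ, heq⟩ := heig
  have hχ_pos : ∀ u, 0 < (if u ∈ A then (1 : ℝ) else 0) → 0 < f u := fun u h =>
    hpos u (by by_contra hu; simp [hu] at h)
  have hχ_nonneg : ∀ u, 0 ≤ (if u ∈ A then (1 : ℝ) else 0) := fun u => by split_ifs <;> norm_num
  have hχ_edge : ∀ u v, G.Adj u v →
      0 < (if v ∈ A then (1 : ℝ) else 0) - (if u ∈ A then 1 else 0) → 0 < f v - f u := by
    intro u v huv h
    by_cases hv : v ∈ A <;> by_cases hu : u ∈ A <;> simp only [hu, hv] at h <;> norm_num at h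
    linarith [hpos v hv, hout v hv u hu huv.symm]
  obtain ⟨a, ha⟩ := hA
  refine ⟨fun h => by simpa [ha] using congrFun h a, fun u hu => ?_, ξ, Ξ,
    fun u => signSet_subset_signSet (hχ_pos u) (fun h => absurd h (hχ_nonneg u).not_gt) (hξ u),
    fun u v huv => signSet_subset_signSet (fun h => ?_) (fun h => ?_) (hΞ u v huv), heq⟩
  · have hu' : u ∉ A := fun hu' => (hpos u hu').ne' (hBd u hu)
    simp [hu']
  · rw [mul_pos_iff_of_pos_left (hω u v huv)] at h ⊢
    exact hχ_edge u v huv h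
  · rw [← neg_pos, ← mul_neg, neg_sub, mul_pos_iff_of_pos_left (hω u v huv)] at h ⊢
    exact hχ_edge v u huv.symm h

theorem oneLap_indicator_of_nodal_domain_is_eigenfunction_general {V : Type*} [Fintype V]
    [DecidableEq V] (G : SimpleGraph V) [DecidableRel G.Adj]
    (ω : V → V → ℝ) (ν : V → ℝ)
    (hω : ∀ u v, G.Adj u v → 0 < ω u v)
    (f : V → ℝ) (Λ : ℝ) (heig : IsOneEigenpair G ω ν (∅ : Set V) f Λ)
    (A : Finset V) (hA : IsStrongNodalDomain G Set.univ f (A : Set V)) :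
    IsOneEigenpair G ω ν (∅ : Set V) (fun u => if u ∈ A then (1 : ℝ) else 0) Λ := by
  have hne : A.Nonempty := Finset.coe_nonempty.mp hA.1
  have of_pos : ∀ g : V → ℝ, IsOneEigenpair G ω ν ∅ g Λ →
      IsStrongNodalDomain G Set.univ g A → (∀ u ∈ A, 0 < g u) →
      IsOneEigenpair G ω ν ∅ (fun u => if u ∈ A then (1 : ℝ) else 0) Λ :=
    fun g hg hgA hpos => isOneEigenpair_indicator_of_pos hg hω hne hpos
      fun _ hu _ hv huv => hgA.nonpos_of_adj hpos hu hv trivial huv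
  rcases hA.2.2.1 with hpos | hneg
  · exact of_pos f heig hA hpos
  · exact of_pos (-f) heig.neg hA.neg fun u hu => neg_pos.mpr (hneg u hu)

/-- If `A` is a strong nodal domain of a `1`-Laplacian eigenfunction `f`
with eigenvalue `Λ`, then the characteristic function `χ_A` is itself a `1`-Laplacian
eigenfunction with the same eigenvalue `Λ`. -/
theorem oneLap_indicator_of_nodal_domain_is_eigenfunction {V : Type*} [Fintype V]
    [DecidableEq V] (G : SimpleGraph V) [DecidableRel G.Adj]
    (ω : V → V → ℝ) (ν : V → ℝ)
    (hω : ∀ u v, G.Adj u v → 0 < ω u v) (hωs : ∀ u v, ω u v = ω v u)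
    (hν : ∀ u, 0 < ν u)
    (f : V → ℝ) (Λ : ℝ) (heig : IsOneEigenpair G ω ν (∅ : Set V) f Λ)
    (A : Finset V) (hA : IsStrongNodalDomain G Set.univ f (A : Set V)) :
    IsOneEigenpair G ω ν (∅ : Set V) (fun u => if u ∈ A then (1 : ℝ) else 0) Λ :=
  oneLap_indicator_of_nodal_domain_is_eigenfunction_general G ω ν hω f Λ heig A hA
end

section
/- Let G be a finite connected weighted graph, and suppose Λ_{k-1}(Δ_1) < Λ_k(Δ_1) for the variational eigenvalues of the 1-Laplacian. Then any eigenfunction associated to Λ_k(Δ_1) has at most N − k + 1 strictly positive entries (and likewise at most N − k + 1 strictly negative entries), where N is the number of interior vertices. -/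
open Finset

/-- The `1`-Rayleigh quotient `R_1(f) = ‖Kf‖_1 / ‖f‖_{ν,1}`. -/
noncomputable def oneRayleigh {V : Type*} [Fintype V] (G : SimpleGraph V)
    [DecidableRel G.Adj] (ω : V → V → ℝ) (ν : V → ℝ) (f : V → ℝ) : ℝ :=
  ((1 / 2) * ∑ u, ∑ v ∈ G.neighborFinset u, ω u v * |f v - f u|) /
    (∑ u, ν u * |f u|)

/-- `genusGe A k` means the Krasnoselskii genus of `A` is at least `k`. -/
def genusGe {V : Type*} [Fintype V] (A : Set (V → ℝ)) (k : ℕ) : Prop :=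
  A.Nonempty ∧ ∀ m : ℕ, m < k →
    ¬ ∃ ψ : (V → ℝ) → EuclideanSpace ℝ (Fin m),
        ContinuousOn ψ A ∧ (∀ f ∈ A, ψ f ≠ 0) ∧ (∀ f ∈ A, ψ (-f) = -ψ f)

/-- The `k`-th variational (Krasnoselskii min-max) eigenvalue of the graph `1`-Laplacian
with Dirichlet boundary `Bd`: min-max of `R_1` over closed symmetric subsets of the unit
`ℓ¹`-sphere of functions vanishing on `Bd`, with Krasnoselskii genus at least `k`. -/
noncomputable def varEigOneB {V : Type*} [Fintype V] (G : SimpleGraph V)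
    [DecidableRel G.Adj] (ω : V → V → ℝ) (ν : V → ℝ) (Bd : Set V) (k : ℕ) : ℝ :=
  sInf { c : ℝ | ∃ A : Set (V → ℝ), IsClosed A ∧ (∀ f ∈ A, -f ∈ A) ∧
    (∀ f ∈ A, (∑ u, ν u * |f u|) = 1) ∧ (∀ f ∈ A, ∀ u ∈ Bd, f u = 0) ∧ genusGe A k ∧
    c = sSup ((fun f => oneRayleigh G ω ν f) '' A) }

/-- The isoperimetric constant `c(A) = ω(E(A,A^c)) / ν(A)` of a vertex subset. -/
noncomputable def isoper {V : Type*} [Fintype V] [DecidableEq V] (G : SimpleGraph V)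
    [DecidableRel G.Adj] (ω : V → V → ℝ) (ν : V → ℝ) (A : Finset V) : ℝ :=
  (∑ u ∈ A, ∑ v ∈ (G.neighborFinset u).filter (fun v => v ∉ A), ω u v) /
    (∑ u ∈ A, ν u)

/-- The `k`-th Cheeger constant relative to the boundary `Bd`: the minimum over families
of `k` pairwise disjoint nonempty subsets of interior vertices of the maximum of their
isoperimetric constants. -/
noncomputable def cheegerB {V : Type*} [Fintype V] [DecidableEq V] (G : SimpleGraph V)
    [DecidableRel G.Adj] (ω : V → V → ℝ) (ν : V → ℝ) (Bd : Set V) (k : ℕ) : ℝ :=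
  sInf { c : ℝ | ∃ A : Fin k → Finset V, (∀ i, (A i).Nonempty) ∧
    (∀ i, ∀ u ∈ A i, u ∉ Bd) ∧
    (∀ i j, i ≠ j → Disjoint (A i) (A j)) ∧
    c = ⨆ i, isoper G ω ν (A i) }

section Aux
set_option linter.unusedSectionVars false
variable {V : Type*} [Fintype V] [DecidableEq V]

lemma signSet_eq_one {x s : ℝ} (h : s ∈ signSet x) (hx : 0 < x) : s = 1 := by
  have h2 := h.2
  rw [abs_of_pos hx] at h2
  have h3 : (s - 1) * x = 0 := by ring_nf; linarith
  rcases mul_eq_zero.1 h3 with h4 | h4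
  · linarith
  · exact absurd h4 (ne_of_gt hx)

lemma signSet_neg {x s : ℝ} (h : s ∈ signSet x) : -s ∈ signSet (-x) := by
  refine ⟨by simpa using h.1, ?_⟩
  rw [neg_mul_neg, abs_neg]; exact h.2

lemma signSet_mem_abs_le {x s : ℝ} (h : s ∈ signSet x) : |s| ≤ 1 := h.1

lemma sum_nbr (G : SimpleGraph V) [DecidableRel G.Adj] (F : V → ℝ) (u : V) :
    ∑ v ∈ G.neighborFinset u, F v = ∑ v, if G.Adj u v then F v else 0 := by
  rw [SimpleGraph.neighborFinset_eq_filter, Finset.sum_filter]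

lemma sum_nbr_swap (G : SimpleGraph V) [DecidableRel G.Adj] (F : V → V → ℝ) :
    ∑ u, ∑ v ∈ G.neighborFinset u, F u v = ∑ u, ∑ v ∈ G.neighborFinset u, F v u := by
  calc ∑ u, ∑ v ∈ G.neighborFinset u, F u v
      = ∑ u, ∑ v, if G.Adj u v then F u v else 0 := by
        simp only [sum_nbr]
    _ = ∑ v, ∑ u, if G.Adj u v then F u v else 0 := Finset.sum_comm
    _ = ∑ u, ∑ v, if G.Adj u v then F v u else 0 := by
        apply Finset.sum_congr rfl; intro u _
        apply Finset.sum_congr rfl; intro v _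
        by_cases h : G.Adj u v
        · rw [if_pos ((G.adj_comm u v).mp h), if_pos h]
        · rw [if_neg (fun hh => h ((G.adj_comm v u).mp hh)), if_neg h]
    _ = ∑ u, ∑ v ∈ G.neighborFinset u, F v u := by
        simp only [sum_nbr]

noncomputable def cutw (G : SimpleGraph V) [DecidableRel G.Adj] (ω : V → V → ℝ)
    (B : Finset V) : ℝ :=
  ∑ u ∈ B, ∑ v ∈ (G.neighborFinset u).filter (fun v => v ∉ B), ω u v

noncomputable def enrg (G : SimpleGraph V) [DecidableRel G.Adj] (ω : V → V → ℝ)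
    (h : V → ℝ) : ℝ :=
  ∑ u, ∑ v ∈ G.neighborFinset u, ω u v * |h v - h u|

lemma enrg_indicator (G : SimpleGraph V) [DecidableRel G.Adj] (ω : V → V → ℝ)
    (hωs : ∀ u v, ω u v = ω v u) (B : Finset V) :
    enrg G ω (fun u => if u ∈ B then (1:ℝ) else 0) = 2 * cutw G ω B := by
  set χ : V → ℝ := fun u => if u ∈ B then (1:ℝ) else 0 with hχ
  have key : ∀ u v : V, |χ v - χ u| = χ u * (1 - χ v) + χ v * (1 - χ u) := by
    intro u v
    by_cases hu : u ∈ B <;> by_cases hv : v ∈ B <;> simp [hχ, hu, hv]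
  have h1 : enrg G ω χ
      = (∑ u, ∑ v ∈ G.neighborFinset u, ω u v * (χ u * (1 - χ v)))
      + (∑ u, ∑ v ∈ G.neighborFinset u, ω u v * (χ v * (1 - χ u))) := by
    unfold enrg
    rw [← Finset.sum_add_distrib]
    apply Finset.sum_congr rfl; intro u _
    rw [← Finset.sum_add_distrib]
    apply Finset.sum_congr rfl; intro v _
    rw [key u v]; ring
  have h2 : (∑ u, ∑ v ∈ G.neighborFinset u, ω u v * (χ v * (1 - χ u)))
      = ∑ u, ∑ v ∈ G.neighborFinset u, ω u v * (χ u * (1 - χ v)) := by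
    rw [sum_nbr_swap G (fun u v => ω u v * (χ v * (1 - χ u)))]
    apply Finset.sum_congr rfl; intro u _
    apply Finset.sum_congr rfl; intro v _
    rw [hωs v u]
  have h3 : (∑ u, ∑ v ∈ G.neighborFinset u, ω u v * (χ u * (1 - χ v))) = cutw G ω B := by
    unfold cutw
    rw [← Finset.sum_subset (Finset.subset_univ B)]
    · apply Finset.sum_congr rfl; intro u hu
      rw [Finset.sum_filter]
      apply Finset.sum_congr rfl; intro v _
      by_cases hv : v ∈ B <;> simp [hχ, hu, hv]
    · intro u _ hu
      have : χ u = 0 := by simp [hχ, hu]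
      simp [this]
  rw [h1, h2, h3]; ring



lemma eig_cut_bound (G : SimpleGraph V) [DecidableRel G.Adj] (ω : V → V → ℝ) (ν : V → ℝ)
    (hω : ∀ u v, G.Adj u v → 0 < ω u v) (hωs : ∀ u v, ω u v = ω v u)
    (Bd : Set V) (f : V → ℝ) (Λ : ℝ)
    (heig : IsOneEigenpair G ω ν Bd f Λ) (B : Finset V) (hB : ∀ u ∈ B, 0 < f u) :
    Λ * ∑ u ∈ B, ν u ≤ cutw G ω B := by
  obtain ⟨hf0, hbd, ξ, Ξ, hξ, hΞ, heq⟩ := heig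
  have hBint : ∀ u ∈ B, u ∉ Bd := by
    intro u hu hmem
    exact absurd (hbd u hmem) (ne_of_gt (hB u hu))
  have hΞle : ∀ u v, G.Adj u v → |Ξ u v| ≤ 1 := fun u v h => (hΞ u v h).1
  set g : V → V → ℝ := fun u v => ω u v * (Ξ v u - Ξ u v) with hg
  have hganti : ∀ u v, g v u = -g u v := by
    intro u v; simp only [hg]; rw [hωs v u]; ring
  have hsum : Λ * ∑ u ∈ B, ν u
      = (1/2) * ∑ u ∈ B, ∑ v ∈ G.neighborFinset u, g u v := by
    rw [Finset.mul_sum, Finset.mul_sum]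
    apply Finset.sum_congr rfl; intro u hu
    have hx : ξ u = 1 := signSet_eq_one (hξ u) (hB u hu)
    rw [show (∑ v ∈ G.neighborFinset u, g u v)
        = ∑ v ∈ G.neighborFinset u, ω u v * (Ξ v u - Ξ u v) from rfl,
      heq u (hBint u hu), hx, mul_one]
  -- split each inner sum into v ∈ B and v ∉ B
  have hsplit : ∀ u, ∑ v ∈ G.neighborFinset u, g u v
      = (∑ v ∈ (G.neighborFinset u).filter (fun v => v ∈ B), g u v)
      + (∑ v ∈ (G.neighborFinset u).filter (fun v => v ∉ B), g u v) := by
    intro u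
    rw [Finset.sum_filter_add_sum_filter_not]
  -- the interior part cancels by antisymmetry
  have hin : ∑ u ∈ B, ∑ v ∈ (G.neighborFinset u).filter (fun v => v ∈ B), g u v = 0 := by
    have hconv : ∀ u, ∑ v ∈ (G.neighborFinset u).filter (fun v => v ∈ B), g u v
        = ∑ v ∈ B, if G.Adj u v then g u v else 0 := by
      intro u
      rw [show (G.neighborFinset u).filter (fun v => v ∈ B)
          = B.filter (fun v => G.Adj u v) by
        ext v; simp [SimpleGraph.mem_neighborFinset]; tauto]
      rw [Finset.sum_filter]
    simp only [hconv]
    have hswap : (∑ u ∈ B, ∑ v ∈ B, if G.Adj u v then g u v else 0)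
        = ∑ u ∈ B, ∑ v ∈ B, if G.Adj v u then g v u else 0 := by
      rw [Finset.sum_comm]
    have hneg : (∑ u ∈ B, ∑ v ∈ B, if G.Adj v u then g v u else 0)
        = -∑ u ∈ B, ∑ v ∈ B, if G.Adj u v then g u v else 0 := by
      rw [← Finset.sum_neg_distrib]
      apply Finset.sum_congr rfl; intro u _
      rw [← Finset.sum_neg_distrib]
      apply Finset.sum_congr rfl; intro v _
      by_cases h : G.Adj u v
      · rw [if_pos ((G.adj_comm u v).mp h), if_pos h, hganti]
      · rw [if_neg (fun hh => h ((G.adj_comm v u).mp hh)), if_neg h, neg_zero]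
    have := hswap.trans hneg
    linarith
  -- the boundary part is at most twice the cut
  have hout : ∑ u ∈ B, ∑ v ∈ (G.neighborFinset u).filter (fun v => v ∉ B), g u v
      ≤ 2 * cutw G ω B := by
    unfold cutw
    rw [Finset.mul_sum]
    apply Finset.sum_le_sum; intro u _
    rw [Finset.mul_sum]
    apply Finset.sum_le_sum; intro v hv
    have hadj : G.Adj u v := (G.mem_neighborFinset u v).mp (Finset.mem_filter.mp hv).1
    have h1 : |Ξ v u| ≤ 1 := hΞle v u (G.adj_comm u v |>.mp hadj)
    have h2 : |Ξ u v| ≤ 1 := hΞle u v hadj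
    have hw : 0 < ω u v := hω u v hadj
    have := abs_le.mp h1
    have := abs_le.mp h2
    simp only [hg]
    nlinarith [this.1, this.2]
  have htot : ∑ u ∈ B, ∑ v ∈ G.neighborFinset u, g u v
      = (∑ u ∈ B, ∑ v ∈ (G.neighborFinset u).filter (fun v => v ∈ B), g u v)
      + (∑ u ∈ B, ∑ v ∈ (G.neighborFinset u).filter (fun v => v ∉ B), g u v) := by
    rw [← Finset.sum_add_distrib]
    exact Finset.sum_congr rfl fun u _ => hsplit u
  rw [hsum]
  rw [htot, hin, zero_add]
  linarith

lemma coarea_bound (G : SimpleGraph V) [DecidableRel G.Adj] (ω : V → V → ℝ) (ν : V → ℝ)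
    (hωs : ∀ u v, ω u v = ω v u) (Λ : ℝ) (S : Finset V)
    (hS : ∀ B : Finset V, B ⊆ S → Λ * ∑ u ∈ B, ν u ≤ cutw G ω B) :
    ∀ (h : V → ℝ), (∀ u, 0 ≤ h u) → (∀ u, u ∉ S → h u = 0) →
      Λ * ∑ u, ν u * h u ≤ (1/2) * enrg G ω h := by
  suffices H : ∀ n (h : V → ℝ), (univ.filter fun u => h u ≠ 0).card ≤ n →
      (∀ u, 0 ≤ h u) → (∀ u, u ∉ S → h u = 0) →
      Λ * ∑ u, ν u * h u ≤ (1/2) * enrg G ω h by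
    intro h h1 h2; exact H _ h le_rfl h1 h2
  intro n
  induction n with
  | zero =>
      intro h hcard hpos hsupp
      have hz : ∀ u, h u = 0 := by
        intro u; by_contra hu
        have hm : u ∈ univ.filter (fun u => h u ≠ 0) := by simp [hu]
        have := Finset.card_pos.mpr ⟨u, hm⟩
        omega
      simp [enrg, hz]
  | succ n ih =>
      intro h hcard hpos hsupp
      by_cases hz : ∀ u, h u = 0
      · simp [enrg, hz]
      push_neg at hz
      set B : Finset V := univ.filter (fun u => 0 < h u) with hBdef
      have hmem : ∀ u, u ∈ B ↔ 0 < h u := by intro u; simp [hBdef]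
      have hBne : B.Nonempty := by
        obtain ⟨u, hu⟩ := hz
        exact ⟨u, (hmem u).mpr (lt_of_le_of_ne (hpos u) (Ne.symm hu))⟩
      obtain ⟨u₀, hu₀B, hu₀min⟩ := Finset.exists_min_image B h hBne
      set t := h u₀ with htdef
      have ht0 : 0 < t := (hmem u₀).mp hu₀B
      set χ : V → ℝ := fun u => if u ∈ B then (1:ℝ) else 0 with hχ
      set h' : V → ℝ := fun u => h u - t * χ u with hh'
      have hzero : ∀ u, u ∉ B → h u = 0 := by
        intro u hu
        by_contra hne
        exact hu ((hmem u).mpr (lt_of_le_of_ne (hpos u) (Ne.symm hne)))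
      have hle : ∀ u, u ∈ B → t ≤ h u := hu₀min
      have h'inB : ∀ u, u ∈ B → h' u = h u - t := by
        intro u hu; simp [hh', hχ, hu]
      have h'outB : ∀ u, u ∉ B → h' u = 0 := by
        intro u hu; simp [hh', hχ, hu, hzero u hu]
      have h'pos : ∀ u, 0 ≤ h' u := by
        intro u
        by_cases hu : u ∈ B
        · rw [h'inB u hu]; linarith [hle u hu]
        · rw [h'outB u hu]
      have hdecomp : ∀ u, h u = t * χ u + h' u := by
        intro u; simp only [hh']; ring
      have key : ∀ u v : V, |h v - h u| = t * |χ v - χ u| + |h' v - h' u| := by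
        intro u v
        by_cases hu : u ∈ B <;> by_cases hv : v ∈ B
        · have e1 : χ v - χ u = 0 := by simp [hχ, hu, hv]
          have e2 : h' v - h' u = h v - h u := by
            rw [h'inB u hu, h'inB v hv]; ring
          rw [e1, e2, abs_zero]; ring
        · have e1 : h v = 0 := hzero v hv
          have e2 : χ u = 1 := by simp [hχ, hu]
          have e3 : χ v = 0 := by simp [hχ, hv]
          have e4 : h' v = 0 := h'outB v hv
          have e5 : h' u = h u - t := h'inB u hu
          rw [e1, e2, e3, e4, e5]
          rw [abs_of_nonpos (by linarith [hle u hu] : (0:ℝ) - h u ≤ 0),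
            abs_of_nonpos (by norm_num : (0:ℝ) - 1 ≤ 0),
            abs_of_nonpos (by linarith [hle u hu] : (0:ℝ) - (h u - t) ≤ 0)]
          ring
        · have e1 : h u = 0 := hzero u hu
          have e2 : χ v = 1 := by simp [hχ, hv]
          have e3 : χ u = 0 := by simp [hχ, hu]
          have e4 : h' u = 0 := h'outB u hu
          have e5 : h' v = h v - t := h'inB v hv
          rw [e1, e2, e3, e4, e5]
          rw [abs_of_nonneg (by linarith [hle v hv] : (0:ℝ) ≤ h v - 0),
            abs_of_nonneg (by norm_num : (0:ℝ) ≤ 1 - 0),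
            abs_of_nonneg (by linarith [hle v hv] : (0:ℝ) ≤ h v - t - 0)]
          ring
        · have e1 : h u = 0 := hzero u hu
          have e2 : h v = 0 := hzero v hv
          have e3 : h' u = 0 := h'outB u hu
          have e4 : h' v = 0 := h'outB v hv
          have e5 : χ u = 0 := by simp [hχ, hu]
          have e6 : χ v = 0 := by simp [hχ, hv]
          rw [e1, e2, e3, e4, e5, e6]
          simp
      have hsupp' : ∀ u, u ∉ S → h' u = 0 := by
        intro u hu
        apply h'outB
        intro huB
        exact absurd (hsupp u hu) (ne_of_gt ((hmem u).mp huB))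
      have hBS : B ⊆ S := by
        intro u hu
        by_contra hus
        exact absurd (hsupp u hus) (ne_of_gt ((hmem u).mp hu))
      have hcard' : (univ.filter fun u => h' u ≠ 0).card ≤ n := by
        have hsub : (univ.filter fun u => h' u ≠ 0)
            ⊆ (univ.filter fun u => h u ≠ 0).erase u₀ := by
          intro u hu
          rw [Finset.mem_filter] at hu
          rw [Finset.mem_erase, Finset.mem_filter]
          constructor
          · rintro rfl
            refine hu.2 ?_
            rw [h'inB _ hu₀B, htdef]
            simp
          · refine ⟨Finset.mem_univ u, ?_⟩
            intro hc
            exact hu.2 (by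
              have : u ∉ B := by rw [hmem]; rw [hc]; simp
              exact h'outB u this)
        have h1 := Finset.card_le_card hsub
        have hu₀mem : u₀ ∈ univ.filter (fun u => h u ≠ 0) := by
          rw [Finset.mem_filter]
          exact ⟨Finset.mem_univ _, by rw [← htdef]; exact ne_of_gt ht0⟩
        have h2 := Finset.card_erase_of_mem hu₀mem
        have h3 := Finset.card_pos.mpr ⟨u₀, hu₀mem⟩
        omega
      have IH := ih h' hcard' h'pos hsupp'
      have hcut := hS B hBS
      have hE : enrg G ω h = t * enrg G ω χ + enrg G ω h' := by
        unfold enrg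
        rw [Finset.mul_sum, ← Finset.sum_add_distrib]
        apply Finset.sum_congr rfl; intro u _
        rw [Finset.mul_sum, ← Finset.sum_add_distrib]
        apply Finset.sum_congr rfl; intro v _
        rw [key u v]; ring
      have hEχ : enrg G ω χ = 2 * cutw G ω B := enrg_indicator G ω hωs B
      have hν : ∑ u, ν u * h u = t * ∑ u ∈ B, ν u + ∑ u, ν u * h' u := by
        have e : ∀ u, ν u * h u = t * (if u ∈ B then ν u else 0) + ν u * h' u := by
          intro u
          rw [hdecomp u]
          by_cases hu : u ∈ B <;> simp [hχ, hu] <;> ring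
        rw [Finset.sum_congr rfl (fun u _ => e u), Finset.sum_add_distrib,
          ← Finset.mul_sum, Finset.sum_ite_mem, Finset.univ_inter]
      calc Λ * ∑ u, ν u * h u
          = t * (Λ * ∑ u ∈ B, ν u) + Λ * ∑ u, ν u * h' u := by rw [hν]; ring
        _ ≤ t * cutw G ω B + (1/2) * enrg G ω h' := by
            have := mul_le_mul_of_nonneg_left hcut ht0.le
            linarith
        _ = (1/2) * enrg G ω h := by rw [hE, hEχ]; ring


lemma genus_exists_zero {A : Set (V → ℝ)} {n : ℕ} (hA : genusGe A n) (T : Finset V)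
    (hT : T.card < n) : ∃ g ∈ A, ∀ t ∈ T, g t = 0 := by
  by_contra hc
  push_neg at hc
  refine hA.2 T.card hT ?_
  set e := T.equivFin with he
  refine ⟨fun g => (EuclideanSpace.equiv (Fin T.card) ℝ).symm
    (fun i => g ((e.symm i : {x // x ∈ T}) : V)), ?_, ?_, ?_⟩
  · apply Continuous.continuousOn
    exact ((EuclideanSpace.equiv (Fin T.card) ℝ).symm.continuous).comp
      (continuous_pi fun i => continuous_apply _)
  · intro g hg hz
    obtain ⟨t, htT, hgt⟩ := hc g hg
    have h0 : (fun i => g ((e.symm i : {x // x ∈ T}) : V)) = 0 := by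
      have := congrArg (EuclideanSpace.equiv (Fin T.card) ℝ) hz
      simpa using this
    have := congrFun h0 (e ⟨t, htT⟩)
    rw [Equiv.symm_apply_apply] at this
    exact hgt this
  · intro g hg
    show (EuclideanSpace.equiv (Fin T.card) ℝ).symm
        (fun i => (-g) ((e.symm i : {x // x ∈ T}) : V)) = _
    have : (fun i => (-g) ((e.symm i : {x // x ∈ T}) : V))
        = -(fun i => g ((e.symm i : {x // x ∈ T}) : V)) := rfl
    rw [this]
    exact map_neg (EuclideanSpace.equiv (Fin T.card) ℝ).symm.toLinearEquiv _


lemma eigenpair_neg (G : SimpleGraph V) [DecidableRel G.Adj] (ω : V → V → ℝ) (ν : V → ℝ)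
    (Bd : Set V) (f : V → ℝ) (Λ : ℝ) (heig : IsOneEigenpair G ω ν Bd f Λ) :
    IsOneEigenpair G ω ν Bd (-f) Λ := by
  obtain ⟨hf0, hbd, ξ, Ξ, hξ, hΞ, heq⟩ := heig
  refine ⟨by simpa using hf0, fun u hu => by simp [hbd u hu], fun u => -ξ u, fun u v => -Ξ u v,
    ?_, ?_, ?_⟩
  · intro u
    have := signSet_neg (hξ u)
    simpa using this
  · intro u v hadj
    have := signSet_neg (hΞ u v hadj)
    have harg : -(ω u v * (f v - f u)) = ω u v * ((-f) v - (-f) u) := by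
      simp; ring
    rwa [harg] at this
  · intro u hu
    have h1 := heq u hu
    have h2 : ∑ v ∈ G.neighborFinset u, ω u v * (-Ξ v u - -Ξ u v)
        = -∑ v ∈ G.neighborFinset u, ω u v * (Ξ v u - Ξ u v) := by
      rw [← Finset.sum_neg_distrib]
      apply Finset.sum_congr rfl; intro v _; ring
    rw [h2]
    linarith

lemma rayleigh_bddAbove (G : SimpleGraph V) [DecidableRel G.Adj] (ω : V → V → ℝ)
    (ν : V → ℝ) (hω : ∀ u v, G.Adj u v → 0 < ω u v) (hν : ∀ u, 0 < ν u)
    (A : Set (V → ℝ)) (hsph : ∀ f ∈ A, ∑ u, ν u * |f u| = 1) :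
    BddAbove ((fun f => oneRayleigh G ω ν f) '' A) := by
  refine ⟨(1/2) * ∑ u, ∑ v ∈ G.neighborFinset u, ω u v * ((ν v)⁻¹ + (ν u)⁻¹), ?_⟩
  rintro x ⟨g, hg, rfl⟩
  have hbound : ∀ u, |g u| ≤ (ν u)⁻¹ := by
    intro u
    have h1 : ν u * |g u| ≤ 1 := by
      rw [← hsph g hg]
      exact Finset.single_le_sum (f := fun u => ν u * |g u|)
        (fun i _ => mul_nonneg (hν i).le (abs_nonneg _)) (Finset.mem_univ u)
    rw [inv_eq_one_div, le_div_iff₀ (hν u)]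
    linarith [h1, mul_comm (ν u) |g u|]
  show oneRayleigh G ω ν g ≤ _
  unfold oneRayleigh
  rw [hsph g hg, div_one]
  have h2 : ∀ u, ∑ v ∈ G.neighborFinset u, ω u v * |g v - g u|
      ≤ ∑ v ∈ G.neighborFinset u, ω u v * ((ν v)⁻¹ + (ν u)⁻¹) := by
    intro u
    apply Finset.sum_le_sum
    intro v hv
    have hadj : G.Adj u v := (G.mem_neighborFinset u v).mp hv
    apply mul_le_mul_of_nonneg_left _ (hω u v hadj).le
    calc |g v - g u| ≤ |g v| + |g u| := abs_sub _ _
      _ ≤ (ν v)⁻¹ + (ν u)⁻¹ := add_le_add (hbound v) (hbound u)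
  have := Finset.sum_le_sum (fun u (_ : u ∈ univ) => h2 u)
  linarith

end Aux

noncomputable def eigSet {V : Type*} [Fintype V] (G : SimpleGraph V)
    [DecidableRel G.Adj] (ω : V → V → ℝ) (ν : V → ℝ) (Bd : Set V) (k : ℕ) : Set ℝ :=
  { c : ℝ | ∃ A : Set (V → ℝ), IsClosed A ∧ (∀ f ∈ A, -f ∈ A) ∧
    (∀ f ∈ A, (∑ u, ν u * |f u|) = 1) ∧ (∀ f ∈ A, ∀ u ∈ Bd, f u = 0) ∧ genusGe A k ∧
    c = sSup ((fun f => oneRayleigh G ω ν f) '' A) }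

lemma varEig_eq {V : Type*} [Fintype V] (G : SimpleGraph V)
    [DecidableRel G.Adj] (ω : V → V → ℝ) (ν : V → ℝ) (Bd : Set V) (k : ℕ) :
    varEigOneB G ω ν Bd k = sInf (eigSet G ω ν Bd k) := rfl

lemma eigSet_anti {V : Type*} [Fintype V] (G : SimpleGraph V)
    [DecidableRel G.Adj] (ω : V → V → ℝ) (ν : V → ℝ) (Bd : Set V) (k : ℕ) :
    eigSet G ω ν Bd k ⊆ eigSet G ω ν Bd (k - 1) := by
  rintro c ⟨A, h1, h2, h3, h4, h5, h6⟩
  exact ⟨A, h1, h2, h3, h4,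
    ⟨h5.1, fun m hm => h5.2 m (lt_of_lt_of_le hm (Nat.sub_le k 1))⟩, h6⟩

lemma support_bound_aux {V : Type*} [Fintype V] [DecidableEq V]
    (G : SimpleGraph V) [DecidableRel G.Adj]
    (ω : V → V → ℝ) (ν : V → ℝ)
    (hω : ∀ u v, G.Adj u v → 0 < ω u v) (hωs : ∀ u v, ω u v = ω v u)
    (hν : ∀ u, 0 < ν u) (Bd : Finset V)
    (k : ℕ) (hk : 1 ≤ k)
    (hgap : varEigOneB G ω ν (↑Bd) (k - 1) < varEigOneB G ω ν (↑Bd) k)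
    (f : V → ℝ)
    (heig : IsOneEigenpair G ω ν (↑Bd : Set V) f (varEigOneB G ω ν (↑Bd) k)) :
    (Finset.univ.filter (fun v => 0 < f v)).card ≤ Bdᶜ.card - k + 1 := by
  set Λ := varEigOneB G ω ν (↑Bd) k with hΛ
  by_contra hm
  set P : Finset V := univ.filter (fun v => 0 < f v) with hP
  have hPBd : P ⊆ Bdᶜ := by
    intro v hv
    rw [Finset.mem_compl]
    intro hvB
    have h0 : f v = 0 := heig.2.1 v (Finset.mem_coe.mpr hvB)
    have h1 : 0 < f v := (Finset.mem_filter.mp hv).2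
    linarith
  have hle : P.card ≤ Bdᶜ.card := Finset.card_le_card hPBd
  set T : Finset V := Bdᶜ \ P with hT
  have hTcard : T.card = Bdᶜ.card - P.card := Finset.card_sdiff_of_subset hPBd
  have hTk : T.card < k - 1 := by omega
  have hkey : ∀ B : Finset V, B ⊆ P → Λ * ∑ u ∈ B, ν u ≤ cutw G ω B := by
    intro B hBP
    exact eig_cut_bound G ω ν hω hωs ↑Bd f Λ heig B
      (fun u hu => (Finset.mem_filter.mp (hBP hu)).2)
  have hmon : Λ ≤ varEigOneB G ω ν ↑Bd (k - 1) := by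
    rcases Set.eq_empty_or_nonempty (eigSet G ω ν (↑Bd : Set V) (k - 1)) with he | hne
    · have h2 : eigSet G ω ν (↑Bd : Set V) k = ∅ :=
        Set.subset_empty_iff.mp (he ▸ eigSet_anti G ω ν ↑Bd k)
      show varEigOneB G ω ν (↑Bd) k ≤ _
      rw [varEig_eq, varEig_eq, h2, he, Real.sInf_empty]
    · rw [varEig_eq]
      apply le_csInf hne
      rintro c ⟨A, hclosed, hsymm, hsph, hbdA, hgenus, rfl⟩
      obtain ⟨g, hgA, hgT⟩ := genus_exists_zero hgenus T hTk
      have hgsupp : ∀ u, u ∉ P → |g u| = 0 := by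
        intro u hu
        rw [abs_eq_zero]
        by_cases hub : u ∈ Bd
        · exact hbdA g hgA u (Finset.mem_coe.mpr hub)
        · exact hgT u (Finset.mem_sdiff.mpr ⟨Finset.mem_compl.mpr hub, hu⟩)
      have hco := coarea_bound G ω ν hωs Λ P hkey (fun u => |g u|)
        (fun u => abs_nonneg _) hgsupp
      have hEE : enrg G ω (fun u => |g u|) ≤ enrg G ω g := by
        unfold enrg
        apply Finset.sum_le_sum; intro u _
        apply Finset.sum_le_sum; intro v hv
        exact mul_le_mul_of_nonneg_left (abs_abs_sub_abs_le_abs_sub _ _)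
          (hω u v ((G.mem_neighborFinset u v).mp hv)).le
      have hRg : Λ ≤ oneRayleigh G ω ν g := by
        have h1 : oneRayleigh G ω ν g
            = (1/2) * ∑ u, ∑ v ∈ G.neighborFinset u, ω u v * |g v - g u| := by
          unfold oneRayleigh; rw [hsph g hgA, div_one]
        have h2 : ∑ u, ν u * |g u| = 1 := hsph g hgA
        have h3 : Λ * ∑ u, ν u * |g u| ≤ (1/2) * enrg G ω (fun u => |g u|) := hco
        rw [h2, mul_one] at h3
        rw [h1]
        show Λ ≤ (1/2) * enrg G ω g
        linarith
      exact hRg.trans (le_csSup (rayleigh_bddAbove G ω ν hω hν A hsph) ⟨g, hgA, rfl⟩)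
  linarith

theorem oneLap_eigenfunction_support_bound {V : Type*} [Fintype V] [DecidableEq V]
    (G : SimpleGraph V) [DecidableRel G.Adj] (hconn : G.Connected)
    (ω : V → V → ℝ) (ν : V → ℝ)
    (hω : ∀ u v, G.Adj u v → 0 < ω u v) (hωs : ∀ u v, ω u v = ω v u)
    (hν : ∀ u, 0 < ν u) (Bd : Finset V)
    (k : ℕ) (hk : 1 ≤ k)
    (hgap : varEigOneB G ω ν (↑Bd) (k - 1) < varEigOneB G ω ν (↑Bd) k)
    (f : V → ℝ)
    (heig : IsOneEigenpair G ω ν (↑Bd : Set V) f (varEigOneB G ω ν (↑Bd) k)) :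
    (Finset.univ.filter (fun v => 0 < f v)).card ≤ Bdᶜ.card - k + 1 ∧
    (Finset.univ.filter (fun v => f v < 0)).card ≤ Bdᶜ.card - k + 1 := by
  constructor
  · exact support_bound_aux G ω ν hω hωs hν Bd k hk hgap f heig
  · have heig' := eigenpair_neg G ω ν ↑Bd f _ heig
    have := support_bound_aux G ω ν hω hωs hν Bd k hk hgap (-f) heig'
    have hfilter : (Finset.univ.filter (fun v => 0 < (-f) v))
        = (Finset.univ.filter (fun v => f v < 0)) := by
      apply Finset.filter_congr
      intro v _
      simp only [Pi.neg_apply, neg_pos]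
    rwa [hfilter] at this
end
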